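/- arXiv:math/0209281 — 6 statements merged into one kernel-verified Lean document; each statement's English description precedes it below -/
import Mathlib

section
/- The integral of (ln x)·(ln(1-x)) over the interval (0,1) equals 2 - π²/6. -/
/-!
Expanding `-log (1 - x) = ∑ xⁿ⁺¹ / (n + 1)`, the integrand `(-log x) (-log (1 - x))` becomes a
series of nonnegative functions, which may be integrated termwise. Since
`∫₀¹ xⁿ⁺¹ log x dx = -1 / (n + 2)²`, the integral equals `∑ 1 / ((n + 1) (n + 2)²)`, and the
partial fractions `1 / (n + 1) - 1 / (n + 2) - 1 / (n + 2)²` split this into a telescoping series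
with sum `1` and the tail `ζ(2) - 1`.
-/

open Real MeasureTheory

open Set Filter Topology

theorem MeasureTheory.hasSum_integral_of_nonneg {α ι : Type*} [MeasurableSpace α] [Countable ι]
    {μ : Measure α} {F : ι → α → ℝ} {f : α → ℝ} (hF_nonneg : ∀ i, 0 ≤ᵐ[μ] F i)
    (hF_int : ∀ i, Integrable (F i) μ) (hf : ∀ᵐ a ∂μ, HasSum (F · a) (f a))
    (hF_sum : Summable fun i ↦ ∫ a, F i a ∂μ) :
    HasSum (fun i ↦ ∫ a, F i a ∂μ) (∫ a, f a ∂μ) := by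
  have h_norm : (fun i ↦ ∫ a, ‖F i a‖ ∂μ) = fun i ↦ ∫ a, F i a ∂μ := by
    ext i
    exact integral_congr_ae <| (hF_nonneg i).mono fun a ha ↦ Real.norm_of_nonneg ha
  have h_tsum : (fun a ↦ ∑' i, F i a) =ᵐ[μ] f := hf.mono fun a ha ↦ ha.tsum_eq
  rw [← integral_congr_ae h_tsum]
  exact hasSum_integral_of_summable_integral_norm hF_int (h_norm ▸ hF_sum)

theorem Antitone.hasSum_sub_succ {f : ℕ → ℝ} {l : ℝ} (hf : Antitone f)
    (hl : Tendsto f atTop (𝓝 l)) : HasSum (fun n ↦ f n - f (n + 1)) (f 0 - l) := by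
  rw [hasSum_iff_tendsto_nat_of_nonneg (fun n ↦ sub_nonneg.2 (hf n.le_succ))]
  simp only [Finset.sum_range_sub']
  exact tendsto_const_nhds.sub hl

theorem hasSum_one_div_succ_mul_add_two_sq :
    HasSum (fun n : ℕ ↦ 1 / ((n + 1) * (n + 2) ^ 2 : ℝ)) (2 - π ^ 2 / 6) := by
  have h_tele : HasSum (fun n : ℕ ↦ 1 / (n + 1 : ℝ) - 1 / (n + 2 : ℝ)) 1 := by
    have h_anti : Antitone fun n : ℕ ↦ 1 / (n + 1 : ℝ) := fun m n hmn ↦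
      one_div_le_one_div_of_le (by positivity) (by gcongr)
    simpa [add_assoc, one_add_one_eq_two] using
      h_anti.hasSum_sub_succ tendsto_one_div_add_atTop_nhds_zero_nat
  have h_zeta : HasSum (fun n : ℕ ↦ 1 / (n + 2 : ℝ) ^ 2) (π ^ 2 / 6 - 1) := by
    simpa [Finset.sum_range_succ] using (hasSum_nat_add_iff' 2).2 hasSum_zeta_two
  have h_split (n : ℕ) :
      1 / ((n + 1) * (n + 2) ^ 2 : ℝ) = 1 / (n + 1) - 1 / (n + 2) - 1 / (n + 2) ^ 2 := by
    field_simp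
    ring
  simp_rw [h_split]
  rw [show (2 : ℝ) - π ^ 2 / 6 = 1 - (π ^ 2 / 6 - 1) by ring]
  exact h_tele.sub h_zeta

theorem intervalIntegrable_pow_mul_log (n : ℕ) (a b : ℝ) :
    IntervalIntegrable (fun x ↦ x ^ n * log x) volume a b :=
  intervalIntegral.intervalIntegrable_log'.continuousOn_mul (continuous_pow n).continuousOn

theorem integral_pow_mul_log (n : ℕ) :
    ∫ x in (0 : ℝ)..1, x ^ n * log x = -1 / (n + 1) ^ 2 := by
  have h_cont : Continuous fun x : ℝ ↦ x ^ (n + 1) * log x :=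
    ((continuous_pow n).mul continuous_mul_log).congr fun x ↦ by
      simp only [Pi.mul_apply]
      ring
  have h_deriv : ∀ x ∈ Ioo (0 : ℝ) 1, HasDerivAt
      (fun x : ℝ ↦ x ^ (n + 1) * log x / (n + 1) - x ^ (n + 1) / (n + 1) ^ 2)
      (x ^ n * log x) x := by
    intro x hx
    have h_pow := hasDerivAt_pow (n + 1) x
    refine (((h_pow.mul (hasDerivAt_log hx.1.ne')).div_const _).sub
      (h_pow.div_const _)).congr_deriv ?_
    push_cast [Nat.add_sub_cancel]
    field_simp [hx.1.ne']
    ring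
  rw [intervalIntegral.integral_eq_sub_of_hasDerivAt_of_le zero_le_one
    (h_cont.div_const _ |>.sub (by fun_prop)).continuousOn h_deriv
    (intervalIntegrable_pow_mul_log n 0 1)]
  norm_num [neg_div]

theorem stmt_0 :
    ∫ x in Set.Ioo (0:ℝ) 1, Real.log x * Real.log (1 - x) = 2 - Real.pi ^ 2 / 6 := by
  set F : ℕ → ℝ → ℝ := fun n x ↦ -(x ^ (n + 1) * log x) / (n + 1)
  have h_series : ∀ x ∈ Ioo (0 : ℝ) 1, HasSum (F · x) (log x * log (1 - x)) := by
    intro x hx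
    have h_abs : |x| < 1 := abs_lt.2 ⟨by linarith [hx.1], hx.2⟩
    have h_terms : (F · x) = fun n : ℕ ↦ -log x * (x ^ (n + 1) / (n + 1)) := by
      ext n
      ring
    rw [h_terms, ← neg_mul_neg]
    exact (hasSum_pow_div_log_of_abs_lt_one h_abs).mul_left _
  have h_nonneg (n : ℕ) : 0 ≤ᵐ[volume.restrict (Ioo 0 1)] F n := by
    refine ae_restrict_of_forall_mem measurableSet_Ioo fun x hx ↦ ?_
    have h_pow : 0 ≤ x ^ (n + 1) := pow_nonneg hx.1.le _
    exact div_nonneg (neg_nonneg.2 (mul_nonpos_of_nonneg_of_nonpos h_pow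
      (log_nonpos hx.1.le hx.2.le))) (by positivity)
  have h_int (n : ℕ) : IntegrableOn (F n) (Ioo 0 1) :=
    ((intervalIntegrable_pow_mul_log (n + 1) 0 1).1.mono_set Ioo_subset_Ioc_self).neg.div_const _
  have h_integral (n : ℕ) : ∫ x in Ioo 0 1, F n x = 1 / ((n + 1) * (n + 2) ^ 2) := by
    rw [integral_div, integral_neg, ← integral_Ioc_eq_integral_Ioo,
      ← intervalIntegral.integral_of_le zero_le_one, integral_pow_mul_log]
    push_cast
    field_simp
    ring
  have h_sum : HasSum (fun n ↦ ∫ x in Ioo 0 1, F n x) (2 - π ^ 2 / 6) := by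
    simpa only [h_integral] using hasSum_one_div_succ_mul_add_two_sq
  exact (hasSum_integral_of_nonneg h_nonneg h_int
    (ae_restrict_of_forall_mem measurableSet_Ioo h_series) h_sum.summable).unique h_sum
end

section
/- Let c = 1 - π²/6 and let r, s be positive reals with r ≤ s. Then for every real t ≥ 0, (t + r·c)/√((t+r)(t+s)) ≥ c·√(r/s). -/
open Real

theorem stmt_6 (r s : ℝ) (hr : 0 < r) (hrs : r ≤ s)
    (c : ℝ) (hc : c = 1 - Real.pi ^ 2 / 6)
    (t : ℝ) (ht : 0 ≤ t) :
    c * Real.sqrt (r / s) ≤ (t + r * c) / Real.sqrt ((t + r) * (t + s)) := by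
  have hs : 0 < s := lt_of_lt_of_le hr hrs
  have hcneg : c < 0 := by
    have hpi : (3:ℝ) < Real.pi := Real.pi_gt_three
    nlinarith [Real.pi_gt_three]
  have htr : 0 < t + r := by linarith
  have hts : 0 < t + s := by linarith
  have hprod : 0 < (t + r) * (t + s) := mul_pos htr hts
  have hsqrt : 0 < Real.sqrt ((t + r) * (t + s)) := Real.sqrt_pos.mpr hprod
  rw [le_div_iff₀ hsqrt]
  have hX : Real.sqrt (r / s) * Real.sqrt ((t + r) * (t + s)) =
      Real.sqrt (r / s * ((t + r) * (t + s))) :=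
    (Real.sqrt_mul (by positivity) _).symm
  have hXr : r ≤ Real.sqrt (r / s * ((t + r) * (t + s))) := by
    have h1 : r ^ 2 ≤ r / s * ((t + r) * (t + s)) := by
      rw [div_mul_eq_mul_div, le_div_iff₀ hs]
      nlinarith [mul_nonneg hr.le (mul_nonneg ht ht),
        mul_nonneg (mul_nonneg hr.le ht) (by linarith : (0:ℝ) ≤ r + s)]
    calc r = Real.sqrt (r ^ 2) := by rw [Real.sqrt_sq hr.le]
    _ ≤ _ := Real.sqrt_le_sqrt h1
  calc c * Real.sqrt (r / s) * Real.sqrt ((t + r) * (t + s))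
      = c * Real.sqrt (r / s * ((t + r) * (t + s))) := by rw [mul_assoc, hX]
    _ ≤ c * r := by nlinarith
    _ ≤ t + r * c := by nlinarith
end

section
/- For every real y₁ > 0, the integral ∫_{y₁ - ln(e^{y₁}-1)}^∞ 1/(e^{y₁} + e^{y₂}) dy₂ equals y₁·e^{-y₁}. -/
/-!
The function `-log (1 + c * exp (-x)) / c` is an antiderivative of `1 / (c + exp x)` that
vanishes at `+∞`, so the integral over `(a, ∞)` is `log (1 + c * exp (-a)) / c`. For `c = exp y₁`
and `a = y₁ - log (exp y₁ - 1)` one has `c * exp (-a) = exp y₁ - 1`, so this is `y₁ / exp y₁`.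
-/

open Real MeasureTheory Filter Set

section

variable {c : ℝ}

theorem hasDerivAt_neg_log_one_add_mul_exp_neg_div (hc : 0 < c) (x : ℝ) :
    HasDerivAt (fun x => -log (1 + c * exp (-x)) / c) (1 / (c + exp x)) x := by
  have hpos : 0 < 1 + c * exp (-x) := by positivity
  have hinner : HasDerivAt (fun x => 1 + c * exp (-x)) (-(c * exp (-x))) x := by
    simpa using ((hasDerivAt_neg x).exp.const_mul c).const_add 1
  refine ((hinner.log hpos.ne').neg.div_const c).congr_deriv ?_
  rw [exp_neg] at hpos ⊢
  field_simp
  ring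

theorem integrableOn_Ioi_one_div_add_exp (hc : 0 ≤ c) (a : ℝ) :
    IntegrableOn (fun x => 1 / (c + exp x)) (Ioi a) := by
  refine (exp_neg_integrableOn_Ioi a one_pos).mono' ?_ (ae_of_all _ fun x => ?_)
  · exact (continuous_const.div (continuous_const.add continuous_exp)
      fun x => (add_pos_of_nonneg_of_pos hc (exp_pos x)).ne').aestronglyMeasurable
  · rw [norm_of_nonneg (by positivity), neg_mul, one_mul, exp_neg, one_div]
    exact inv_anti₀ (exp_pos x) (le_add_of_nonneg_left hc)

theorem tendsto_neg_log_one_add_mul_exp_neg_div_atTop :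
    Tendsto (fun x => -log (1 + c * exp (-x)) / c) atTop (nhds 0) := by
  have h : Tendsto (fun x => 1 + c * exp (-x)) atTop (nhds 1) := by
    simpa using (tendsto_exp_neg_atTop_nhds_zero.const_mul c).const_add 1
  simpa using ((continuousAt_log one_ne_zero).tendsto.comp h).neg.div_const c

theorem integral_Ioi_one_div_add_exp (hc : 0 < c) (a : ℝ) :
    ∫ x in Ioi a, 1 / (c + exp x) = log (1 + c * exp (-a)) / c := by
  rw [integral_Ioi_of_hasDerivAt_of_tendsto'
    (fun x _ => hasDerivAt_neg_log_one_add_mul_exp_neg_div hc x)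
    (integrableOn_Ioi_one_div_add_exp hc.le a) tendsto_neg_log_one_add_mul_exp_neg_div_atTop]
  ring

end

theorem stmt_11 (y₁ : ℝ) (hy₁ : 0 < y₁) :
    ∫ y₂ in Set.Ioi (y₁ - Real.log (Real.exp y₁ - 1)),
      1 / (Real.exp y₁ + Real.exp y₂) = y₁ * Real.exp (-y₁) := by
  have hpos : 0 < exp y₁ - 1 := sub_pos.2 (one_lt_exp_iff.2 hy₁)
  have hlimit : exp y₁ * exp (-(y₁ - log (exp y₁ - 1))) = exp y₁ - 1 := by
    rw [neg_sub, exp_sub, exp_log hpos]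
    field_simp
  rw [integral_Ioi_one_div_add_exp (exp_pos y₁), hlimit, add_sub_cancel, log_exp, exp_neg,
    div_eq_mul_inv]
end

section
/- Let α > 0, let X₀ be a random variable with the gamma distribution with shape α and rate 1, and let U be uniformly distributed on (0,1), independent of X₀. Define Y₁ = X₀ - ln U and Y₂ = X₀ - ln(1-U). Then the law of (Y₁, Y₂) is absolutely continuous with respect to the Lebesgue measure on ℝ², with density f(y₁,y₂) = (y₁ - ln(1+e^{y₁-y₂}))^{α-1} / (Γ(α)·(e^{y₁} + e^{y₂})) on the region {(y₁,y₂) : y₁ > 0 and y₂ > y₁ - ln(e^{y₁}-1)}, and density 0 outside that region. -/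
/-!
The pair `(X₀, U)` has density `x ^ (α - 1) e^{-x} / Γ(α)` on `(0, ∞) × (0, 1)`, and
`(x, u) ↦ (x - log u, x - log (1 - u))` maps this strip bijectively onto the region in the
statement, with inverse `y ↦ (y₁ - log (1 + e^{y₁ - y₂}), (1 + e^{y₁ - y₂})⁻¹)`. Its Jacobian is
`1 / u + 1 / (1 - u) = 1 / (u (1 - u))`, while `e^{y₁} + e^{y₂} = e^x / (u (1 - u))`, so the
change of variables formula turns the density of `(X₀, U)` into the claimed one.
-/

open Real MeasureTheory ProbabilityTheory Set
open scoped ENNReal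

section ChangeOfVariables

variable {E : Type*} [NormedAddCommGroup E] [NormedSpace ℝ E] [FiniteDimensional ℝ E]
  [MeasurableSpace E] [BorelSpace E] (μ : Measure E) [μ.IsAddHaarMeasure]

theorem map_withDensity_restrict_eq_withDensity_restrict_image {s : Set E} {f : E → E}
    {f' : E → E →L[ℝ] E} (hf : Measurable f) (hs : MeasurableSet s)
    (hf' : ∀ x ∈ s, HasFDerivWithinAt f (f' x) s x) (hinj : InjOn f s) {ρ g : E → ℝ≥0∞}
    (hρg : ∀ x ∈ s, ENNReal.ofReal |(f' x).det| * g (f x) = ρ x) :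
    ((μ.restrict s).withDensity ρ).map f = (μ.restrict (f '' s)).withDensity g := by
  ext A hA
  have hfA : MeasurableSet (f ⁻¹' A) := hf hA
  have hcov := lintegral_image_eq_lintegral_abs_det_fderiv_mul μ hs hf' hinj (A.indicator g)
  rw [lintegral_indicator hA, Measure.restrict_restrict hA] at hcov
  rw [Measure.map_apply hf hA, withDensity_apply _ hfA, withDensity_apply _ hA,
    Measure.restrict_restrict hA, hcov, ← lintegral_indicator hfA]
  refine (setLIntegral_congr_fun hs fun x hx => ?_).symm
  by_cases hxA : f x ∈ A
  · rw [indicator_of_mem hxA, indicator_of_mem (mem_preimage.mpr hxA), hρg x hx]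
  · rw [indicator_of_notMem hxA, indicator_of_notMem (show x ∉ f ⁻¹' A from hxA), mul_zero]

end ChangeOfVariables

theorem gammaMeasure_eq_withDensity_restrict_Ioi (a r : ℝ) :
    gammaMeasure a r = (volume.restrict (Ioi 0)).withDensity (gammaPDF a r) := by
  have hsupp : (Ici 0).indicator (gammaPDF a r) = gammaPDF a r :=
    indicator_eq_self.mpr fun x hx => not_lt.mp fun hneg => hx (gammaPDF_of_neg hneg)
  calc gammaMeasure a r = volume.withDensity ((Ici 0).indicator (gammaPDF a r)) := by
        rw [hsupp, gammaMeasure]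
    _ = _ := by
        rw [withDensity_indicator measurableSet_Ici, Measure.restrict_congr_set Ioi_ae_eq_Ici]

theorem gammaMeasure_prod_uniform (a r : ℝ) :
    (gammaMeasure a r).prod (volume.restrict (Ioo (0 : ℝ) 1)) =
      (volume.restrict (Ioi 0 ×ˢ Ioo 0 1)).withDensity fun p => gammaPDF a r p.1 := by
  rw [gammaMeasure_eq_withDensity_restrict_Ioi,
    prod_withDensity_left (f := gammaPDF a r) (measurable_gammaPDFReal a r).ennreal_ofReal,
    Measure.prod_restrict, Measure.volume_eq_prod]

noncomputable def logPairMap (p : ℝ × ℝ) : ℝ × ℝ :=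
  (p.1 - log p.2, p.1 - log (1 - p.2))

noncomputable def logPairMapInv (q : ℝ × ℝ) : ℝ × ℝ :=
  (q.1 - log (1 + exp (q.1 - q.2)), (1 + exp (q.1 - q.2))⁻¹)

noncomputable def logPairMapDeriv (p : ℝ × ℝ) : (ℝ × ℝ) →L[ℝ] (ℝ × ℝ) :=
  (ContinuousLinearMap.fst ℝ ℝ ℝ - p.2⁻¹ • ContinuousLinearMap.snd ℝ ℝ ℝ).prod
    (ContinuousLinearMap.fst ℝ ℝ ℝ + (1 - p.2)⁻¹ • ContinuousLinearMap.snd ℝ ℝ ℝ)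

def gammaUniformSupport : Set (ℝ × ℝ) := Ioi 0 ×ˢ Ioo 0 1

def logPairRegion : Set (ℝ × ℝ) := {q | 0 < q.1 ∧ q.1 - log (exp q.1 - 1) < q.2}

theorem measurableSet_gammaUniformSupport : MeasurableSet gammaUniformSupport :=
  measurableSet_Ioi.prod measurableSet_Ioo

theorem measurableSet_logPairRegion : MeasurableSet logPairRegion := by
  unfold logPairRegion
  measurability

theorem measurable_logPairMap : Measurable logPairMap := by
  unfold logPairMap
  fun_prop

theorem logPairMap_fst_sub_snd (p : ℝ × ℝ) :
    (logPairMap p).1 - (logPairMap p).2 = log (1 - p.2) - log p.2 := by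
  simp only [logPairMap]
  ring

theorem logPairMap_hasFDerivAt {p : ℝ × ℝ} (hp : p ∈ gammaUniformSupport) :
    HasFDerivAt logPairMap (logPairMapDeriv p) p := by
  have hu : p.2 ≠ 0 := hp.2.1.ne'
  have hu' : 1 - p.2 ≠ 0 := (sub_pos.mpr hp.2.2).ne'
  have hfst : HasFDerivAt (fun q : ℝ × ℝ => q.1) (ContinuousLinearMap.fst ℝ ℝ ℝ) p :=
    hasFDerivAt_fst
  have hsnd : HasFDerivAt (fun q : ℝ × ℝ => q.2) (ContinuousLinearMap.snd ℝ ℝ ℝ) p :=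
    hasFDerivAt_snd
  refine (hfst.sub (hsnd.log hu)).prodMk
    ((hfst.sub (((hasFDerivAt_const 1 p).sub hsnd).log hu')).congr_fderiv ?_)
  ext <;> simp

theorem logPairMapDeriv_det (p : ℝ × ℝ) : (logPairMapDeriv p).det = p.2⁻¹ + (1 - p.2)⁻¹ := by
  have hmatrix : LinearMap.toMatrix (Module.Basis.finTwoProd ℝ) (Module.Basis.finTwoProd ℝ)
      (logPairMapDeriv p : (ℝ × ℝ) →ₗ[ℝ] (ℝ × ℝ)) = !![1, -p.2⁻¹; 1, (1 - p.2)⁻¹] := by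
    ext i j
    fin_cases i <;> fin_cases j <;>
      simp [LinearMap.toMatrix_apply, logPairMapDeriv, Module.Basis.finTwoProd_zero,
        Module.Basis.finTwoProd_one]
  rw [ContinuousLinearMap.det, ← LinearMap.det_toMatrix (Module.Basis.finTwoProd ℝ), hmatrix,
    Matrix.det_fin_two_of]
  ring

theorem logPairMap_logPairMapInv (q : ℝ × ℝ) : logPairMap (logPairMapInv q) = q := by
  have hE : 0 < exp (q.1 - q.2) := exp_pos _
  have h1E : 0 < 1 + exp (q.1 - q.2) := by positivity
  have hcompl : 1 - (1 + exp (q.1 - q.2))⁻¹ = exp (q.1 - q.2) / (1 + exp (q.1 - q.2)) := by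
    field_simp
    ring
  simp only [logPairMap, logPairMapInv, log_inv, hcompl, log_div hE.ne' h1E.ne', log_exp]
  ext <;> ring

theorem leftInvOn_logPairMapInv : LeftInvOn logPairMapInv logPairMap gammaUniformSupport := by
  rintro p ⟨-, hu0, hu1⟩
  have h1u : 0 < 1 - p.2 := sub_pos.mpr hu1
  have hsum : 1 + exp ((logPairMap p).1 - (logPairMap p).2) = p.2⁻¹ := by
    rw [logPairMap_fst_sub_snd, exp_sub, exp_log h1u, exp_log hu0]
    field_simp
    ring
  simp only [logPairMapInv, hsum, log_inv, inv_inv]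
  ext <;> simp [logPairMap]

theorem mapsTo_logPairMap : MapsTo logPairMap gammaUniformSupport logPairRegion := by
  rintro p ⟨hx, hu0, hu1⟩
  have hy₁ : 0 < (logPairMap p).1 := by
    have := log_neg hu0 hu1
    simp only [logPairMap]
    linarith [show (0 : ℝ) < p.1 from hx]
  have h1u : 0 < 1 - p.2 := sub_pos.mpr hu1
  have hexp : exp ((logPairMap p).1 - (logPairMap p).2) < exp (logPairMap p).1 - 1 := by
    rw [logPairMap_fst_sub_snd, exp_sub, exp_log h1u, exp_log hu0, logPairMap, exp_sub,
      exp_log hu0, div_sub_one hu0.ne', div_lt_div_iff_of_pos_right hu0]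
    linarith [one_lt_exp_iff.mpr (show (0 : ℝ) < p.1 from hx)]
  refine ⟨hy₁, ?_⟩
  rw [← lt_log_iff_exp_lt (by linarith [one_lt_exp_iff.mpr hy₁])] at hexp
  linarith

theorem mapsTo_logPairMapInv : MapsTo logPairMapInv logPairRegion gammaUniformSupport := by
  rintro q ⟨hq₁, hq₂⟩
  have hlt : exp (q.1 - q.2) < exp q.1 - 1 := by
    have h1 : 1 < exp q.1 := one_lt_exp_iff.mpr hq₁
    calc exp (q.1 - q.2) < exp (log (exp q.1 - 1)) := exp_lt_exp.mpr (by linarith)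
      _ = exp q.1 - 1 := exp_log (by linarith)
  refine ⟨?_, inv_pos.mpr (by positivity), inv_lt_one_of_one_lt₀ (by linarith [exp_pos (q.1 - q.2)])⟩
  show 0 < q.1 - log (1 + exp (q.1 - q.2))
  rw [sub_pos, log_lt_iff_lt_exp (by positivity)]
  linarith

theorem bijOn_logPairMap : BijOn logPairMap gammaUniformSupport logPairRegion :=
  InvOn.bijOn ⟨leftInvOn_logPairMapInv, fun q _ => logPairMap_logPairMapInv q⟩
    mapsTo_logPairMap mapsTo_logPairMapInv

noncomputable def logPairDensity (α : ℝ) (q : ℝ × ℝ) : ℝ≥0∞ :=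
  ENNReal.ofReal ((q.1 - log (1 + exp (q.1 - q.2))) ^ (α - 1) /
    (Gamma α * (exp q.1 + exp q.2)))

theorem abs_det_mul_logPairDensity (α : ℝ) {p : ℝ × ℝ} (hp : p ∈ gammaUniformSupport) :
    ENNReal.ofReal |(logPairMapDeriv p).det| * logPairDensity α (logPairMap p) =
      gammaPDF α 1 p.1 := by
  obtain ⟨hx, hu0, hu1⟩ := hp
  have h1u : 0 < 1 - p.2 := sub_pos.mpr hu1
  have hdet : 0 ≤ p.2⁻¹ + (1 - p.2)⁻¹ := by positivity
  have hexp_sum : (p.2⁻¹ + (1 - p.2)⁻¹) / (exp (logPairMap p).1 + exp (logPairMap p).2) =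
      exp (-p.1) := by
    simp only [logPairMap, exp_sub, exp_log hu0, exp_log h1u, exp_neg]
    field_simp
  have hx₁ : (logPairMap p).1 - log (1 + exp ((logPairMap p).1 - (logPairMap p).2)) = p.1 :=
    congrArg Prod.fst (leftInvOn_logPairMapInv ⟨hx, hu0, hu1⟩)
  rw [logPairMapDeriv_det, abs_of_nonneg hdet, logPairDensity, ← ENNReal.ofReal_mul hdet,
    gammaPDF_of_nonneg hx.le, hx₁, one_rpow, one_mul, ← hexp_sum, div_mul_eq_div_div_swap]
  ring_nf

theorem stmt_12_general {Ω : Type*} [MeasureSpace Ω] [IsProbabilityMeasure (ℙ : Measure Ω)]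
    (α : ℝ)
    (X₀ U : Ω → ℝ) (hX₀ : Measurable X₀) (hU : Measurable U)
    (hgamma : Measure.map X₀ ℙ = gammaMeasure α 1)
    (hunif : Measure.map U ℙ = volume.restrict (Set.Ioo (0:ℝ) 1))
    (hindep : IndepFun X₀ U ℙ)
    (Y₁ Y₂ : Ω → ℝ)
    (hY₁ : Y₁ = fun ω => X₀ ω - Real.log (U ω))
    (hY₂ : Y₂ = fun ω => X₀ ω - Real.log (1 - U ω)) :
    Measure.map (fun ω => (Y₁ ω, Y₂ ω)) ℙ
      = (volume : Measure (ℝ × ℝ)).withDensity (fun p =>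
          if 0 < p.1 ∧ p.1 - Real.log (Real.exp p.1 - 1) < p.2 then
            ENNReal.ofReal ((p.1 - Real.log (1 + Real.exp (p.1 - p.2))) ^ (α - 1) /
              (Real.Gamma α * (Real.exp p.1 + Real.exp p.2)))
          else 0) := by
  subst hY₁ hY₂
  have hpair : Measurable fun ω => (X₀ ω, U ω) := hX₀.prodMk hU
  have hlaw : Measure.map (fun ω => (X₀ ω, U ω)) ℙ =
      (volume.restrict gammaUniformSupport).withDensity fun p => gammaPDF α 1 p.1 := by
    rw [(indepFun_iff_map_prod_eq_prod_map_map hX₀.aemeasurable hU.aemeasurable).mp hindep,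
      hgamma, hunif, gammaMeasure_prod_uniform, gammaUniformSupport]
  calc Measure.map (fun ω => (X₀ ω - log (U ω), X₀ ω - log (1 - U ω))) ℙ
      = (Measure.map (fun ω => (X₀ ω, U ω)) ℙ).map logPairMap :=
        (Measure.map_map measurable_logPairMap hpair).symm
    _ = (volume.restrict logPairRegion).withDensity (logPairDensity α) := by
        rw [hlaw, map_withDensity_restrict_eq_withDensity_restrict_image volume
          measurable_logPairMap measurableSet_gammaUniformSupport
          (fun p hp => (logPairMap_hasFDerivAt hp).hasFDerivWithinAt) bijOn_logPairMap.injOn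
          (fun p hp => abs_det_mul_logPairDensity α hp), bijOn_logPairMap.image_eq]
    _ = volume.withDensity (logPairRegion.indicator (logPairDensity α)) :=
        (withDensity_indicator measurableSet_logPairRegion _).symm
    _ = _ := by
        congr 1
        ext p
        simp only [indicator_apply, logPairRegion, mem_ofPred_eq, logPairDensity]

theorem stmt_12 {Ω : Type*} [MeasureSpace Ω] [IsProbabilityMeasure (ℙ : Measure Ω)]
    (α : ℝ) (hα : 0 < α)
    (X₀ U : Ω → ℝ) (hX₀ : Measurable X₀) (hU : Measurable U)
    (hgamma : Measure.map X₀ ℙ = gammaMeasure α 1)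
    (hunif : Measure.map U ℙ = volume.restrict (Set.Ioo (0:ℝ) 1))
    (hindep : IndepFun X₀ U ℙ)
    (Y₁ Y₂ : Ω → ℝ)
    (hY₁ : Y₁ = fun ω => X₀ ω - Real.log (U ω))
    (hY₂ : Y₂ = fun ω => X₀ ω - Real.log (1 - U ω)) :
    Measure.map (fun ω => (Y₁ ω, Y₂ ω)) ℙ
      = (volume : Measure (ℝ × ℝ)).withDensity (fun p =>
          if 0 < p.1 ∧ p.1 - Real.log (Real.exp p.1 - 1) < p.2 then
            ENNReal.ofReal ((p.1 - Real.log (1 + Real.exp (p.1 - p.2))) ^ (α - 1) /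
              (Real.Gamma α * (Real.exp p.1 + Real.exp p.2)))
          else 0) :=
  stmt_12_general α X₀ U hX₀ hU hgamma hunif hindep Y₁ Y₂ hY₁ hY₂
end

section
/- Let θ ∈ [-1, 0), let r, s be positive reals with r ≤ s, and let t ≥ 0 be real. Then (t + rθ/4)/√((t+r)(t+s)) ≥ (θ/4)·√(r/s), and (θ/4)·√(r/s) ≥ -1/4; hence (t + rθ/4)/√((t+r)(t+s)) ≥ -1/4. -/
open Real

theorem stmt_17 (θ r s t : ℝ) (hθ : θ ∈ Set.Ico (-1 : ℝ) 0)
    (hr : 0 < r) (hrs : r ≤ s) (ht : 0 ≤ t) :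
    (θ / 4) * Real.sqrt (r / s) ≤ (t + r * θ / 4) / Real.sqrt ((t + r) * (t + s)) ∧
    (-1 / 4 : ℝ) ≤ (θ / 4) * Real.sqrt (r / s) ∧
    (-1 / 4 : ℝ) ≤ (t + r * θ / 4) / Real.sqrt ((t + r) * (t + s)) := by
  obtain ⟨hθ1, hθ0⟩ := hθ
  have hs : 0 < s := lt_of_lt_of_le hr hrs
  have htr : 0 < t + r := by linarith
  have hts : 0 < t + s := by linarith
  have hD : 0 < Real.sqrt ((t + r) * (t + s)) :=
    Real.sqrt_pos.mpr (mul_pos htr hts)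
  have hq0 : 0 ≤ Real.sqrt (r / s) := Real.sqrt_nonneg _
  have hq1 : Real.sqrt (r / s) ≤ 1 := by
    rw [show (1 : ℝ) = Real.sqrt 1 by simp]
    exact Real.sqrt_le_sqrt (by rw [div_le_one hs]; exact hrs)
  have h2 : (-1 / 4 : ℝ) ≤ (θ / 4) * Real.sqrt (r / s) := by nlinarith
  have h1 : (θ / 4) * Real.sqrt (r / s) ≤ (t + r * θ / 4) / Real.sqrt ((t + r) * (t + s)) := by
    rw [le_div_iff₀ hD]
    rcases le_or_gt 0 (t + r * θ / 4) with hcase | hcase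
    · have : (θ / 4) * Real.sqrt (r / s) * Real.sqrt ((t + r) * (t + s)) ≤ 0 := by
        apply mul_nonpos_of_nonpos_of_nonneg
        · apply mul_nonpos_of_nonpos_of_nonneg (by linarith) hq0
        · exact hD.le
      linarith
    · have key : -(t + r * θ / 4) ≤ (-θ / 4) * (Real.sqrt (r / s) * Real.sqrt ((t + r) * (t + s))) := by
        rw [← Real.sqrt_mul (by positivity : (0:ℝ) ≤ r / s)]
        rw [show (-θ / 4) * Real.sqrt (r / s * ((t + r) * (t + s)))
            = Real.sqrt ((-θ / 4) ^ 2 * (r / s * ((t + r) * (t + s)))) by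
          rw [Real.sqrt_mul (sq_nonneg _), Real.sqrt_sq (by linarith)]]
        rw [Real.le_sqrt (by linarith) (by positivity)]
        rw [div_mul_eq_mul_div, ← mul_div_assoc, le_div_iff₀ hs]
        have hc0 : 0 ≤ -θ / 4 := by linarith
        have hc1 : -θ / 4 ≤ 1 / 4 := by linarith
        have hcr : 0 ≤ -θ / 4 * r - t := by nlinarith
        have hsr : 0 ≤ s - (-θ / 4) ^ 2 * r := by nlinarith
        have hQ : 0 ≤ t * ((-θ / 4 * r - t) * (s - (-θ / 4) ^ 2 * r)) :=
          mul_nonneg ht (mul_nonneg hcr hsr)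
        have h3 : 0 ≤ t * ((-θ / 4) ^ 2 * r ^ 2) := by positivity
        have h4 : 0 ≤ t * ((-θ / 4) ^ 2 * r * s) := by positivity
        have h5 : 0 ≤ t * ((-θ / 4) * r * s) := by positivity
        have h6 : 0 ≤ t * ((-θ / 4) ^ 3 * r ^ 2) := by positivity
        nlinarith [hQ, h3, h4, h5, h6]
      nlinarith
  exact ⟨h1, h2, le_trans h2 h1⟩
end

section
/- Let m, n be integers with 6 ≤ m ≤ n and let ρ₀ be a real number with -(m-5)/(4√(mn)) ≤ ρ₀ < 0. Set y = 4m - 4ρ₀√(mn), r = ⌈y/5⌉, and θ = 4 - y/r. Then 1 ≤ r ≤ m-1, -1 ≤ θ < 0, and (m - r + rθ/4)/√(mn) = ρ₀ (so that with α₀ = m - r ≥ 1 and s = n - α₀ ≥ r, the second method attains the target correlation ρ₀). -/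
open Real

theorem stmt_18 (m n : ℤ) (hm : 6 ≤ m) (hmn : m ≤ n)
    (ρ₀ : ℝ) (hρ₀lb : -((m : ℝ) - 5) / (4 * Real.sqrt ((m : ℝ) * n)) ≤ ρ₀)
    (hρ₀neg : ρ₀ < 0)
    (y : ℝ) (hy : y = 4 * (m : ℝ) - 4 * ρ₀ * Real.sqrt ((m : ℝ) * n))
    (r : ℤ) (hr : r = ⌈y / 5⌉)
    (θ : ℝ) (hθ : θ = 4 - y / (r : ℝ)) :
    1 ≤ r ∧ r ≤ m - 1 ∧ -1 ≤ θ ∧ θ < 0 ∧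
      (((m : ℝ) - r) + r * θ / 4) / Real.sqrt ((m : ℝ) * n) = ρ₀ := by
  have hmr : (6 : ℝ) ≤ (m : ℝ) := by exact_mod_cast hm
  have hnr : (6 : ℝ) ≤ (n : ℝ) := le_trans hmr (by exact_mod_cast hmn)
  have hS : 0 < Real.sqrt ((m : ℝ) * n) := Real.sqrt_pos.mpr (by nlinarith)
  -- lower bound on y
  have hylb : 4 * (m : ℝ) < y := by nlinarith
  -- upper bound on y
  have hyub : y ≤ 5 * (m : ℝ) - 5 := by
    have h1 : -((m : ℝ) - 5) ≤ ρ₀ * (4 * Real.sqrt ((m : ℝ) * n)) := by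
      have := (div_le_iff₀ (by positivity : (0:ℝ) < 4 * Real.sqrt ((m : ℝ) * n))).mp hρ₀lb
      linarith
    nlinarith
  have hr1 : 1 ≤ r := by
    have h0 : (0 : ℤ) < ⌈y / 5⌉ := Int.lt_ceil.mpr (by push_cast; linarith)
    omega
  have hrm : r ≤ m - 1 := by
    rw [hr]
    apply Int.ceil_le.mpr
    push_cast
    linarith
  have hrpos : (0 : ℝ) < (r : ℝ) := by exact_mod_cast hr1
  have hry : y ≤ 5 * (r : ℝ) := by
    have := Int.le_ceil (y / 5)
    rw [← hr] at this
    linarith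
  have h4r : 4 * (r : ℝ) < y := by
    have := Int.ceil_lt_add_one (y / 5)
    rw [← hr] at this
    nlinarith
  refine ⟨hr1, hrm, ?_, ?_, ?_⟩
  · rw [hθ]
    have h5 : y / (r : ℝ) ≤ 5 := (div_le_iff₀ hrpos).mpr (by linarith)
    linarith
  · rw [hθ]
    have : 4 < y / (r : ℝ) := (lt_div_iff₀ hrpos).mpr (by linarith)
    linarith
  · rw [hθ]
    have hrne : (r : ℝ) ≠ 0 := ne_of_gt hrpos
    have h1 : (r : ℝ) * (4 - y / r) / 4 = (r : ℝ) - y / 4 := by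
      field_simp
    rw [h1]
    have h2 : ((m : ℝ) - r) + ((r : ℝ) - y / 4) = ρ₀ * Real.sqrt ((m : ℝ) * n) := by
      rw [hy]; ring
    rw [h2, mul_div_assoc, div_self (ne_of_gt hS), mul_one]
end
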